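/- arXiv:2011.12807 — 2 statements merged into one kernel-verified Lean document; each statement's English description precedes it below -/
import Mathlib

section
/- For α ∈ [0,1) and θ*(α) = arccos(1-α), the function g_α(θ) = |1-(1-α)cos θ|/((1-α)|sin θ|) attains at θ = θ*(α) the value √(1-(1-α)²)/(1-α) = tan(θ*(α)). Moreover for every θ ∈ (0,π), g_α(θ) ≥ g_α(θ*(α)). -/
/-!
Write `c = 1 - α ∈ (0, 1]`. The identity
`(1 - c cos θ)² - (1 - c²) sin² θ = (cos θ - c)²`
gives `|1 - c cos θ| ≥ √(1 - c²) |sin θ|`, i.e. `g_α(θ) ≥ √(1 - c²) / c`, with equality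
exactly when `cos θ = c`, that is at `θ = arccos c`.
-/

open Real

lemma sq_one_sub_mul_cos_sub_mul_sq_sin (c θ : ℝ) :
    (1 - c * cos θ) ^ 2 - (1 - c ^ 2) * sin θ ^ 2 = (cos θ - c) ^ 2 := by
  linear_combination (c ^ 2 - 1) * cos_sq_add_sin_sq θ

lemma sqrt_one_sub_sq_mul_abs_sin_le (c θ : ℝ) :
    √(1 - c ^ 2) * |sin θ| ≤ |1 - c * cos θ| := by
  rw [← sqrt_sq_eq_abs, ← sqrt_sq_eq_abs, ← sqrt_mul' _ (sq_nonneg _)]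
  apply sqrt_le_sqrt
  linarith [sq_one_sub_mul_cos_sub_mul_sq_sin c θ, sq_nonneg (cos θ - c)]

lemma sqrt_one_sub_sq_div_le {c θ : ℝ} (hc : 0 < c) (hθ : sin θ ≠ 0) :
    √(1 - c ^ 2) / c ≤ |1 - c * cos θ| / (c * |sin θ|) := by
  rw [div_le_div_iff₀ hc (by positivity)]
  calc √(1 - c ^ 2) * (c * |sin θ|) = c * (√(1 - c ^ 2) * |sin θ|) := by ring
    _ ≤ c * |1 - c * cos θ| :=
      mul_le_mul_of_nonneg_left (sqrt_one_sub_sq_mul_abs_sin_le c θ) hc.le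
    _ = |1 - c * cos θ| * c := mul_comm _ _

lemma abs_one_sub_mul_cos_arccos_div {c : ℝ} (hc₀ : -1 ≤ c) (hc₁ : c ≤ 1) :
    |1 - c * cos (arccos c)| / (c * |sin (arccos c)|) = √(1 - c ^ 2) / c := by
  have hsq : 0 ≤ 1 - c ^ 2 := by nlinarith
  rw [cos_arccos hc₀ hc₁, sin_arccos, abs_of_nonneg (sqrt_nonneg _), ← sq,
    abs_of_nonneg hsq]
  nth_rewrite 1 [← sq_sqrt hsq]
  rw [sq, div_mul_eq_div_div_swap, mul_self_div_self]

theorem stmt3 (α : ℝ) (hα : α ∈ Set.Ico (0:ℝ) 1) :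
    let θs := Real.arccos (1-α)
    (|1 - (1-α)*Real.cos θs| / ((1-α) * |Real.sin θs|)
        = Real.sqrt (1 - (1-α)^2) / (1-α)) ∧
    (Real.sqrt (1 - (1-α)^2) / (1-α) = Real.tan θs) ∧
    (∀ θ ∈ Set.Ioo (0:ℝ) π,
      |1 - (1-α)*Real.cos θ| / ((1-α) * |Real.sin θ|)
        ≥ Real.sqrt (1 - (1-α)^2) / (1-α)) := by
  obtain ⟨hα₀, hα₁⟩ := hα
  refine ⟨abs_one_sub_mul_cos_arccos_div (by linarith) (by linarith),
    (tan_arccos _).symm, fun θ hθ => ?_⟩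
  exact sqrt_one_sub_sq_div_le (by linarith) (sin_pos_of_pos_of_lt_pi hθ.1 hθ.2).ne'
end

section
/- Let d > 0, x_b = (d,0), n = (cos ψ, sin ψ) with ψ ∈ (0, π/2). If for some θ ∈ (0, π/2) the point z*(θ) = d cos θ (cos θ, sin θ) satisfies (z*(θ) - x_b)·n ≥ 0, then for every φ ∈ [0, θ], (z*(φ) - x_b)·n ≥ 0. -/
/-!
The margin of `z*(x)` is `d sin x sin (ψ - x)`. Adversariality at `θ ∈ (0, π/2)` therefore
forces `θ ≤ ψ`, and then both sine factors are nonnegative for every `φ ∈ [0, θ]`.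
-/

open Real

theorem circle_point_margin_eq (d ψ x : ℝ) :
    (d * cos x * cos x - d) * cos ψ + (d * cos x * sin x) * sin ψ
      = d * sin x * sin (ψ - x) := by
  rw [sin_sub]
  linear_combination (d * cos ψ) * sin_sq_add_cos_sq x

theorem le_of_sin_sub_nonneg {ψ θ : ℝ} (h : 0 ≤ sin (ψ - θ)) (hπ : θ - π < ψ) : θ ≤ ψ := by
  by_contra! hlt
  exact h.not_gt (sin_neg_of_neg_of_neg_pi_lt (by linarith) (by linarith))

theorem sin_mul_sin_sub_nonneg {ψ φ : ℝ} (hφ : 0 ≤ φ) (hφψ : φ ≤ ψ) (hψ : ψ ≤ π) :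
    0 ≤ sin φ * sin (ψ - φ) :=
  mul_nonneg (sin_nonneg_of_nonneg_of_le_pi hφ (hφψ.trans hψ))
    (sin_nonneg_of_nonneg_of_le_pi (by linarith) (by linarith))

theorem stmt6 (d ψ θ : ℝ) (hd : 0 < d)
    (hψ : ψ ∈ Set.Ioo (0:ℝ) (π/2)) (hθ : θ ∈ Set.Ioo (0:ℝ) (π/2))
    (hadv : (d*Real.cos θ*Real.cos θ - d) * Real.cos ψ
              + (d*Real.cos θ*Real.sin θ) * Real.sin ψ ≥ 0) :
    ∀ φ ∈ Set.Icc (0:ℝ) θ,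
      (d*Real.cos φ*Real.cos φ - d) * Real.cos ψ
        + (d*Real.cos φ*Real.sin φ) * Real.sin ψ ≥ 0 := by
  obtain ⟨hψ0, hψπ⟩ := hψ
  obtain ⟨hθ0, hθπ⟩ := hθ
  rintro φ ⟨hφ0, hφθ⟩
  rw [circle_point_margin_eq] at hadv ⊢
  have hsinθ : 0 < d * sin θ := mul_pos hd (sin_pos_of_pos_of_lt_pi hθ0 (by linarith [pi_pos]))
  have hθψ : θ ≤ ψ :=
    le_of_sin_sub_nonneg (nonneg_of_mul_nonneg_right hadv hsinθ) (by linarith [pi_pos])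
  rw [mul_assoc]
  exact mul_nonneg hd.le (sin_mul_sin_sub_nonneg hφ0 (hφθ.trans hθψ) (by linarith [pi_pos]))
end
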